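/- Let T be an h-inductive L-theory and A a pc model of T. Then T_u*(A) is minimal in the set {T_u*(B) : B ⊨ T} ordered by inclusion: for every model B of T with T_u*(B) ⊆ T_u*(A), one has T_u*(A) ⊆ T_u*(B). -/

import Mathlib

open FirstOrder FirstOrder.Language

universe u v w w'

namespace PositiveLogic

/-- Positive formulas with `n` free variables: built from `⊥`, atomic formulas,
`∧`, `∨` and `∃`. -/
inductive PosForm (L : FirstOrder.Language.{u, v}) : ℕ → Type (max u v)
  | falsum {n : ℕ} : PosForm L n
  | equal {n : ℕ} (t u : L.Term (Fin n)) : PosForm L n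
  | rel {n l : ℕ} (R : L.Relations l) (ts : Fin l → L.Term (Fin n)) : PosForm L n
  | and {n : ℕ} (φ ψ : PosForm L n) : PosForm L n
  | or {n : ℕ} (φ ψ : PosForm L n) : PosForm L n
  | ex {n : ℕ} (φ : PosForm L (n + 1)) : PosForm L n

variable {L : FirstOrder.Language.{u, v}}

/-- Realization of a positive formula in a structure. -/
def PosForm.Realize {M : Type w} [L.Structure M] :
    ∀ {n : ℕ}, PosForm L n → (Fin n → M) → Prop
  | _, .falsum, _ => False
  | _, .equal t u, v => t.realize v = u.realize v
  | _, .rel R ts, v => Structure.RelMap R fun i => (ts i).realize v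
  | _, .and φ ψ, v => φ.Realize v ∧ ψ.Realize v
  | _, .or φ ψ, v => φ.Realize v ∨ ψ.Realize v
  | _, .ex φ, v => ∃ x : M, φ.Realize (Fin.snoc v x)

/-- A positive sentence `φ` (element of `PosForm L 0`) holds in `M`. -/
def PosRealize (M : Type w) [L.Structure M] (φ : PosForm L 0) : Prop :=
  φ.Realize (Fin.elim0 : Fin 0 → M)

/-- `Diag⁺*(M)`: the set of positive `L`-sentences true in `M`. -/
def posTheory (M : Type w) [L.Structure M] : Set (PosForm L 0) :=
  {φ | PosRealize M φ}

/-- `T_u*(M)`, identified with the set of positive `L`-sentences whose negation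
(an h-universal sentence) is true in `M`. -/
def TuStar (M : Type w) [L.Structure M] : Set (PosForm L 0) :=
  {φ | ¬ PosRealize M φ}

/-- A basic h-inductive sentence `∀ x̄ (φ(x̄) → ψ(x̄))` with `φ, ψ` positive.
(A general h-inductive sentence, a finite conjunction of such, is equivalent to
the set of its conjuncts.) -/
structure HInd (L : FirstOrder.Language.{u, v}) : Type (max u v) where
  n : ℕ
  hyp : PosForm L n
  concl : PosForm L n

/-- Realization of a basic h-inductive sentence. -/
def HInd.Realize (s : HInd L) (M : Type w) [L.Structure M] : Prop :=
  ∀ v : Fin s.n → M, s.hyp.Realize v → s.concl.Realize v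

/-- `M` is a model of the h-inductive theory `T`. -/
def HModels (M : Type w) [L.Structure M] (T : Set (HInd L)) : Prop :=
  ∀ s ∈ T, s.Realize M

/-- `T_i*(M)`: the set of (basic) h-inductive `L`-sentences true in `M`. -/
def TiStar (M : Type w) [L.Structure M] : Set (HInd L) :=
  {s | s.Realize M}

/-- `T_u(T)`: the h-universal consequences of `T`, identified with the set of
positive sentences `φ` such that `¬φ` holds in every model of `T`. -/
def TuOf (T : Set (HInd L)) : Set (PosForm L 0) :=
  {φ | ∀ (M : Type (max u v)) [L.Structure M], HModels M T → ¬ PosRealize M φ}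

/-- A homomorphism is an immersion if it preserves and reflects all positive
formulas. -/
def IsImmersion {A : Type w} {B : Type w'} [L.Structure A] [L.Structure B]
    (f : A →[L] B) : Prop :=
  ∀ {n : ℕ} (φ : PosForm L n) (v : Fin n → A), φ.Realize v ↔ φ.Realize (f ∘ v)

/-- A homomorphism `f : A → B` is a strong immersion if `B`, with parameters
from `A` interpreted via `f`, models `T_i(A)`, the full h-inductive
`L(A)`-theory of `A`. -/
def IsStrongImmersion {A : Type w} {B : Type w'} [L.Structure A] [L.Structure B]
    (f : A →[L] B) : Prop :=
  ∀ {n m : ℕ} (φ ψ : PosForm L (n + m)) (a : Fin m → A),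
    (∀ v : Fin n → A, φ.Realize (Fin.append v a) → ψ.Realize (Fin.append v a)) →
    ∀ v : Fin n → B, φ.Realize (Fin.append v (f ∘ a)) → ψ.Realize (Fin.append v (f ∘ a))

/-- `M` is a positively closed (pc) model of `T`: it models `T` and every
homomorphism from `M` into a model of `T` is an immersion. -/
def IsPC (T : Set (HInd L)) (M : Type (max u v)) [L.Structure M] : Prop :=
  HModels M T ∧
    ∀ (N : Type (max u v)) [L.Structure N], HModels N T → ∀ f : M →[L] N, IsImmersion f

/-- `T` has the joint continuation property (is positively complete). -/
def JCP (T : Set (HInd L)) : Prop :=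
  ∀ (A : Type (max u v)) [L.Structure A] (B : Type (max u v)) [L.Structure B],
    HModels A T → HModels B T →
      ∃ (C : Type (max u v)) (_ : L.Structure C),
        HModels C T ∧ Nonempty (A →[L] C) ∧ Nonempty (B →[L] C)

/-- `T₁` and `T₂` are `T`-complete. -/
def TComplete (T₁ T₂ T : Set (HInd L)) : Prop :=
  ∀ (A : Type (max u v)) [L.Structure A] (B : Type (max u v)) [L.Structure B],
    HModels A T₁ → HModels B T₂ →
      ∃ (C : Type (max u v)) (_ : L.Structure C),
        HModels C T ∧ Nonempty (A →[L] C) ∧ Nonempty (B →[L] C)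

/-! If `A ⊭ φ` but `B ⊨ φ`, compactness gives a structure `C ≡ B` receiving a homomorphism
from `A`: a finite part of the positive diagram of `A`, existentially closed, is a positive
sentence true in `A`, hence true in `B` because `T_u*(B) ⊆ T_u*(A)`. Then `C ⊨ T` and `C ⊨ φ`,
and as `A` is pc the homomorphism `A → C` reflects `φ`. -/

namespace PosForm

def toBoundedFormula {α : Type*} : ∀ {n : ℕ}, PosForm L n → L.BoundedFormula α n
  | _, .falsum => ⊥
  | _, .equal t u => Term.bdEqual (t.relabel Sum.inr) (u.relabel Sum.inr)
  | _, .rel R ts => Relations.boundedFormula R fun i => (ts i).relabel Sum.inr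
  | _, .and φ ψ => φ.toBoundedFormula ⊓ ψ.toBoundedFormula
  | _, .or φ ψ => φ.toBoundedFormula ⊔ ψ.toBoundedFormula
  | _, .ex φ => φ.toBoundedFormula.ex

theorem realize_toBoundedFormula {M : Type w} [L.Structure M] {α : Type*} (v : α → M) :
    ∀ {n : ℕ} (φ : PosForm L n) (xs : Fin n → M),
      (φ.toBoundedFormula : L.BoundedFormula α n).Realize v xs ↔ φ.Realize xs
  | _, .falsum, _ => Iff.rfl
  | _, .equal t u, xs => by
      simp [toBoundedFormula, PosForm.Realize, Term.realize_relabel]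
  | _, .rel R ts, xs => by
      simp [toBoundedFormula, PosForm.Realize, Term.realize_relabel]
  | _, .and φ ψ, xs => by
      simp [toBoundedFormula, PosForm.Realize, realize_toBoundedFormula v φ xs,
        realize_toBoundedFormula v ψ xs]
  | _, .or φ ψ, xs => by
      simp [toBoundedFormula, PosForm.Realize, realize_toBoundedFormula v φ xs,
        realize_toBoundedFormula v ψ xs]
  | _, .ex φ, xs => by
      simp only [toBoundedFormula, BoundedFormula.realize_ex, PosForm.Realize]
      exact exists_congr fun x => realize_toBoundedFormula v φ _

def toSentence (φ : PosForm L 0) : L.Sentence := φ.toBoundedFormula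

theorem realize_toSentence (M : Type w) [L.Structure M] (φ : PosForm L 0) :
    M ⊨ φ.toSentence ↔ PosRealize M φ := by
  rw [PosRealize, ← realize_toBoundedFormula (default : Empty → M) φ,
    Subsingleton.elim (Fin.elim0 : Fin 0 → M) default]
  rfl

def relabel : ∀ {n m : ℕ}, (Fin n → Fin m) → PosForm L n → PosForm L m
  | _, _, _, .falsum => .falsum
  | _, _, g, .equal t u => .equal (t.relabel g) (u.relabel g)
  | _, _, g, .rel R ts => .rel R fun i => (ts i).relabel g
  | _, _, g, .and φ ψ => .and (φ.relabel g) (ψ.relabel g)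
  | _, _, g, .or φ ψ => .or (φ.relabel g) (ψ.relabel g)
  | _, m, g, .ex φ => .ex (φ.relabel (Fin.snoc (Fin.castSucc ∘ g) (Fin.last m)))

theorem realize_relabel {M : Type w} [L.Structure M] :
    ∀ {n m : ℕ} (g : Fin n → Fin m) (φ : PosForm L n) (v : Fin m → M),
      (φ.relabel g).Realize v ↔ φ.Realize (v ∘ g)
  | _, _, _, .falsum, _ => Iff.rfl
  | _, _, g, .equal t u, v => by simp [relabel, PosForm.Realize, Term.realize_relabel]
  | _, _, g, .rel R ts, v => by simp [relabel, PosForm.Realize, Term.realize_relabel]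
  | _, _, g, .and φ ψ, v => and_congr (realize_relabel g φ v) (realize_relabel g ψ v)
  | _, _, g, .or φ ψ, v => or_congr (realize_relabel g φ v) (realize_relabel g ψ v)
  | _, _, g, .ex φ, v => exists_congr fun x => by
      rw [realize_relabel, Fin.comp_snoc, ← Function.comp_assoc, Fin.snoc_comp_castSucc,
        Fin.snoc_last]

def exs : ∀ {n : ℕ}, PosForm L n → PosForm L 0
  | 0, φ => φ
  | _ + 1, φ => exs φ.ex

theorem realize_exs {M : Type w} [L.Structure M] :
    ∀ {n : ℕ} (φ : PosForm L n), PosRealize M φ.exs ↔ ∃ v : Fin n → M, φ.Realize v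
  | 0, φ => ⟨fun h => ⟨Fin.elim0, h⟩, fun ⟨v, hv⟩ => by
      rwa [PosRealize, exs, Subsingleton.elim Fin.elim0 v]⟩
  | n + 1, φ => by
      rw [exs, realize_exs φ.ex]
      constructor
      · rintro ⟨v, x, hx⟩
        exact ⟨Fin.snoc v x, hx⟩
      · rintro ⟨v, hv⟩
        exact ⟨Fin.init v, v (Fin.last n), by rwa [Fin.snoc_init_self]⟩

/-- Positive logic has no `⊤`: the empty conjunction is `x₀ = x₀`, hence the extra
variable. -/
def conj {n : ℕ} (l : List (PosForm L (n + 1))) : PosForm L (n + 1) :=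
  l.foldr .and (.equal (Term.var 0) (Term.var 0))

theorem realize_conj {M : Type w} [L.Structure M] {n : ℕ} (l : List (PosForm L (n + 1)))
    (v : Fin (n + 1) → M) : (conj l).Realize v ↔ ∀ φ ∈ l, φ.Realize v := by
  induction l with
  | nil => simp [conj, PosForm.Realize]
  | cons φ l ih => simp [conj, PosForm.Realize, ← ih]

end PosForm

def HInd.toSentence (s : HInd L) : L.Sentence :=
  (s.hyp.toBoundedFormula.imp s.concl.toBoundedFormula).alls

theorem HInd.realize_toSentence (M : Type w) [L.Structure M] (s : HInd L) :
    M ⊨ s.toSentence ↔ s.Realize M := by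
  simp [HInd.toSentence, Sentence.Realize, BoundedFormula.realize_alls, HInd.Realize,
    PosForm.realize_toBoundedFormula]

section ElementarilyEquivalent

variable {M : Type w} {N : Type w'} [L.Structure M] [L.Structure N]

theorem _root_.FirstOrder.Language.ElementarilyEquivalent.posRealize_iff (h : M ≅[L] N)
    (φ : PosForm L 0) : PosRealize M φ ↔ PosRealize N φ := by
  rw [← PosForm.realize_toSentence, ← PosForm.realize_toSentence,
    elementarilyEquivalent_iff.1 h]

theorem _root_.FirstOrder.Language.ElementarilyEquivalent.hModels_iff (h : M ≅[L] N)
    (T : Set (HInd L)) : HModels M T ↔ HModels N T :=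
  forall₂_congr fun s _ => by
    rw [← HInd.realize_toSentence, ← HInd.realize_toSentence, elementarilyEquivalent_iff.1 h]

end ElementarilyEquivalent

theorem IsImmersion.posRealize_iff {A : Type w} {B : Type w'} [L.Structure A] [L.Structure B]
    {f : A →[L] B} (hf : IsImmersion f) (φ : PosForm L 0) :
    PosRealize A φ ↔ PosRealize B φ := by
  rw [PosRealize, hf φ, Subsingleton.elim (f ∘ Fin.elim0) Fin.elim0]
  rfl

/-- A positive formula with parameters from `A` substituted for its variables: an element of the
positive diagram of `A` once it holds in `A`. -/
structure ParamSentence (L : FirstOrder.Language.{u, v}) (A : Type w) where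
  n : ℕ
  form : PosForm L n
  params : Fin n → A

namespace ParamSentence

variable {A : Type w}

def Realize {M : Type w'} [L.Structure M] (s : ParamSentence L A) (w : A → M) : Prop :=
  s.form.Realize (w ∘ s.params)

def toSentence (s : ParamSentence L A) : L[[A]].Sentence :=
  ((L.lhomWithConstants A).onBoundedFormula
    (s.form.toBoundedFormula : L.BoundedFormula Empty s.n)).toFormula.subst
      (Sum.elim Empty.elim fun i => (L.con (s.params i)).term)

theorem realize_toSentence (M : Type w') [L.Structure M] [L[[A]].Structure M]
    [(L.lhomWithConstants A).IsExpansionOn M] (s : ParamSentence L A) :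
    M ⊨ s.toSentence ↔ s.Realize fun a => (L.con a : M) := by
  rw [toSentence, Sentence.Realize, Formula.Realize, BoundedFormula.realize_subst,
    ← Formula.Realize, BoundedFormula.realize_toFormula, LHom.realize_onBoundedFormula,
    PosForm.realize_toBoundedFormula]
  simp only [Function.comp_def, Sum.elim_inr, Term.realize_constants]
  rfl

end ParamSentence

section Diagram

variable {A : Type w} [L.Structure A]

variable (L A) in
def posDiagram : L[[A]].Theory :=
  ParamSentence.toSentence '' {s : ParamSentence L A | s.Realize id}

theorem exists_realize_of_posTheory_subset [Nonempty A] {B : Type w'} [L.Structure B]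
    (htr : posTheory A ⊆ posTheory (L := L) B) (U : Finset (ParamSentence L A))
    (hU : ∀ s ∈ U, s.Realize id) : ∃ w : A → B, ∀ s ∈ U, s.Realize w := by
  classical
  let xs : List A := U.toList.flatMap fun s => List.ofFn s.params
  -- Equal parameters must become the same variable: each is sent to its first position in `xs`.
  let idx : A → Fin (xs.length + 1) := fun a =>
    ⟨xs.idxOf a, Nat.lt_succ_of_le List.idxOf_le_length⟩
  let c : Fin (xs.length + 1) → A := fun j => xs.getD j (Classical.arbitrary A)
  have hc : ∀ s ∈ U, c ∘ idx ∘ s.params = s.params := by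
    intro s hs
    funext j
    have hmem : s.params j ∈ xs :=
      List.mem_flatMap.2 ⟨s, Finset.mem_toList.2 hs, List.mem_ofFn.2 ⟨j, rfl⟩⟩
    have hlt := List.idxOf_lt_length_of_mem hmem
    change xs.getD (xs.idxOf (s.params j)) _ = _
    rw [List.getD_eq_getElem _ _ hlt, List.getElem_idxOf hlt]
  let Φ : PosForm L (xs.length + 1) :=
    PosForm.conj (U.toList.map fun s => s.form.relabel (idx ∘ s.params))
  have hΦA : PosRealize A Φ.exs := by
    refine (PosForm.realize_exs Φ).2 ⟨c, (PosForm.realize_conj _ c).2 ?_⟩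
    simp only [List.mem_map, Finset.mem_toList, forall_exists_index, and_imp]
    rintro _ s hs rfl
    rw [PosForm.realize_relabel, hc s hs]
    exact hU s hs
  obtain ⟨v, hv⟩ := (PosForm.realize_exs Φ).1 (htr hΦA)
  refine ⟨v ∘ idx, fun s hs => ?_⟩
  have := (PosForm.realize_conj _ v).1 hv _ (List.mem_map.2 ⟨s, Finset.mem_toList.2 hs, rfl⟩)
  rwa [PosForm.realize_relabel] at this

theorem isSatisfiable_onTheory_completeTheory_union_posDiagram [Nonempty A] {B : Type w'}
    [L.Structure B] (htr : posTheory A ⊆ posTheory (L := L) B) :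
    ((L.lhomWithConstants A).onTheory (L.completeTheory B) ∪ posDiagram L A).IsSatisfiable := by
  classical
  rw [Theory.isSatisfiable_iff_isFinitelySatisfiable]
  intro T0 hT0
  obtain ⟨T₁, T₂, rfl, hT₁, hT₂⟩ := Finset.subset_union_elim hT0
  obtain ⟨U, hU, rfl⟩ := Finset.subset_set_image_iff.1 (hT₂.trans Set.sdiff_subset)
  obtain ⟨w, hw⟩ := exists_realize_of_posTheory_subset htr U hU
  let _ : (constantsOn A).Structure B := constantsOn.structure w
  have : Nonempty B := ⟨w (Classical.arbitrary A)⟩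
  have : B ⊨ ((T₁ ∪ U.image ParamSentence.toSentence : Finset _) : L[[A]].Theory) := by
    simp only [Theory.model_iff, Finset.coe_union, Finset.coe_image, Set.mem_union,
      Set.mem_image, Finset.mem_coe]
    rintro σ (hσ | ⟨s, hs, rfl⟩)
    · obtain ⟨ψ, hψ, rfl⟩ := hT₁ hσ
      exact (LHom.realize_onSentence B _ ψ).2 hψ
    · exact (ParamSentence.realize_toSentence B s).2 (hw s hs)
  exact Theory.Model.isSatisfiable B

end Diagram

section Homomorphisms

variable {A : Type w} [L.Structure A]

def homOfModelsPosDiagram (C : Type w') [L.Structure C] [L[[A]].Structure C]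
    [(L.lhomWithConstants A).IsExpansionOn C] (hC : C ⊨ posDiagram L A) : A →[L] C :=
  have hdiag : ∀ s : ParamSentence L A, s.Realize id → s.Realize fun a => (L.con a : C) :=
    fun s hs => (s.realize_toSentence C).1 (hC.realize_of_mem _ ⟨s, hs, rfl⟩)
  { toFun := fun a => (L.con a : C)
    map_fun' := fun {l} F x => by
      have := hdiag ⟨l + 1, .equal (.func F fun i => .var i.castSucc) (.var (Fin.last l)),
        Fin.snoc x (Structure.funMap F x)⟩ (by simp [ParamSentence.Realize, PosForm.Realize])
      simpa [ParamSentence.Realize, PosForm.Realize, Function.comp_def] using this.symm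
    map_rel' := fun {l} R x hx => hdiag ⟨l, .rel R .var, x⟩ hx }

def homOfIsEmpty [IsEmpty A] {B : Type w'} [L.Structure B]
    (htr : posTheory A ⊆ posTheory (L := L) B) : A →[L] B where
  toFun := isEmptyElim
  map_fun' F x := isEmptyElim (Structure.funMap F x)
  map_rel' := fun {l} R x hx => by
    cases l with
    | zero =>
      have hB := @htr (.rel R Fin.elim0) (by change Structure.RelMap R _; convert hx)
      change Structure.RelMap R _ at hB
      convert hB
    | succ l => exact isEmptyElim (x 0)

theorem exists_hom_elementarilyEquivalent {B : Type (max u v w)} [L.Structure B]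
    (htr : posTheory A ⊆ posTheory (L := L) B) :
    ∃ (C : Type (max u v w)) (_ : L.Structure C),
      L.ElementarilyEquivalent C B ∧ Nonempty (A →[L] C) := by
  rcases isEmpty_or_nonempty A with _ | _
  · exact ⟨B, inferInstance, rfl, ⟨homOfIsEmpty htr⟩⟩
  obtain ⟨C⟩ := isSatisfiable_onTheory_completeTheory_union_posDiagram htr
  let _ : L.Structure C := (L.lhomWithConstants A).reduct C
  have hC := C.is_model
  rw [Theory.model_union_iff, LHom.onTheory_model] at hC
  obtain ⟨_, hdiag⟩ := hC
  exact ⟨C, inferInstance,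
    elementarilyEquivalent_iff.2 (FirstOrder.Language.realize_iff_of_model_completeTheory B C),
    ⟨homOfModelsPosDiagram C hdiag⟩⟩

end Homomorphisms

/-- the h-universal theory of a pc model of `T` is minimal among
h-universal theories of models of `T`. -/
theorem TuStar_minimal_of_pc (T : Set (HInd L)) (A : Type (max u v)) [L.Structure A]
    (hA : IsPC T A) (B : Type (max u v)) [L.Structure B] (hB : HModels B T)
    (h : TuStar (L := L) B ⊆ TuStar (L := L) A) : TuStar (L := L) A ⊆ TuStar (L := L) B := by
  intro φ hφA hφB
  obtain ⟨C, _, hCB, ⟨f⟩⟩ :=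
    exists_hom_elementarilyEquivalent (A := A) (Set.compl_subset_compl.1 h)
  have hf : IsImmersion f := hA.2 C ((hCB.hModels_iff T).2 hB) f
  exact hφA ((hf.posRealize_iff φ).2 ((hCB.posRealize_iff φ).2 hφB))
end PositiveLogic
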